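/- arXiv:1610.02151 — 9 statements merged into one kernel-verified Lean document; each statement's English description precedes it below -/
import Mathlib

section
/- Let ε and ε⋆ be Hermitian involutions. Define Ê = 1 − (1 − ε⋆)(1 + εε⋆)⁻¹(1 − ε), assuming 1 + εε⋆ is invertible. Then Ê = ε + (1 + ε)(ε + ε⋆)⁻¹(1 − ε), where (ε + ε⋆)⁻¹ exists since ε + ε⋆ = ε(1 + εε⋆). -/
open Matrix

/-- With ε² = ε⋆² = 1 and 1 + εε⋆ invertible,
Ê = 1 − (1−ε⋆)(1+εε⋆)⁻¹(1−ε) equals ε + (1+ε)(ε+ε⋆)⁻¹(1−ε). -/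
theorem stmt1 {n : ℕ} (ε εs : Matrix (Fin n) (Fin n) ℂ)
    (hεH : εᴴ = ε) (hε2 : ε * ε = 1)
    (hεsH : εsᴴ = εs) (hεs2 : εs * εs = 1)
    (hU : IsUnit (1 + ε * εs)) :
    1 - (1 - εs) * (1 + ε * εs)⁻¹ * (1 - ε)
      = ε + (1 + ε) * (ε + εs)⁻¹ * (1 - ε) := by
  set A := 1 + ε * εs with hA
  have hεinv : ε⁻¹ = ε := Matrix.inv_eq_right_inv hε2
  have h1 : ε + εs = ε * A := by
    rw [hA, mul_add, mul_one, ← mul_assoc, hε2, one_mul]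
  have hinv : (ε + εs)⁻¹ = A⁻¹ * ε := by
    rw [h1, Matrix.mul_inv_rev, hεinv]
  have hAd : IsUnit A.det := (Matrix.isUnit_iff_isUnit_det A).mp hU
  have hAB : A * A⁻¹ = 1 := Matrix.mul_nonsing_inv A hAd
  set B := A⁻¹ with hB
  have h2 : ε * (1 - ε) = -(1 - ε) := by
    rw [mul_sub, mul_one, hε2, neg_sub]
  have h3 : (1 + ε) * (B * ε) * (1 - ε) = -((1 + ε) * B * (1 - ε)) := by
    rw [← mul_assoc (1 + ε) B ε, mul_assoc ((1 + ε) * B) ε (1 - ε), h2, mul_neg]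
  have key : (1 - εs) * B * (1 - ε) + (1 + ε) * (B * ε) * (1 - ε) = 1 - ε := by
    rw [h3]
    have : (1 - εs) * B * (1 - ε) - (1 + ε) * B * (1 - ε)
        = ((1 - εs) - (1 + ε)) * B * (1 - ε) := by noncomm_ring
    rw [sub_eq_add_neg] at this
    rw [this]
    have h4 : (1 - εs) - (1 + ε) = -(ε + εs) := by noncomm_ring
    rw [h4, h1, neg_mul, neg_mul, mul_assoc ε A B, hAB, mul_one, h2, neg_neg]
  rw [hinv]
  calc 1 - (1 - εs) * B * (1 - ε)
      = (1 - εs) * B * (1 - ε) + (1 + ε) * (B * ε) * (1 - ε) + ε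
          - (1 - εs) * B * (1 - ε) := by rw [key]; noncomm_ring
    _ = ε + (1 + ε) * (B * ε) * (1 - ε) := by noncomm_ring
end

section
/- Let ε and ε⋆ be involutions (ε² = ε⋆² = 1) on a finite-dimensional complex vector space such that 1 + εε⋆ is invertible. Then the operator Ê = ε + (1 + ε)(ε + ε⋆)⁻¹(1 − ε) satisfies Ê² = 1. -/
open Matrix

/-- With ε² = ε⋆² = 1 and 1 + εε⋆ invertible,
Ê = ε + (1+ε)(ε+ε⋆)⁻¹(1−ε) satisfies Ê² = 1. -/
theorem stmt2 {n : ℕ} (ε εs : Matrix (Fin n) (Fin n) ℂ)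
    (hε2 : ε * ε = 1) (hεs2 : εs * εs = 1)
    (hU : IsUnit (1 + ε * εs)) :
    (ε + (1 + ε) * (ε + εs)⁻¹ * (1 - ε)) * (ε + (1 + ε) * (ε + εs)⁻¹ * (1 - ε)) = 1 := by
  set B := (ε + εs)⁻¹ with hB
  have h0 : (1 - ε) * (1 + ε) = 0 := by
    have : (1 - ε) * (1 + ε) = 1 - ε * ε := by noncomm_ring
    rw [this, hε2, sub_self]
  have h1 : ε * (1 + ε) = 1 + ε := by
    have : ε * (1 + ε) = ε * ε + ε := by noncomm_ring
    rw [this, hε2]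
  have h2 : (1 - ε) * ε = -(1 - ε) := by
    have : (1 - ε) * ε = ε - ε * ε := by noncomm_ring
    rw [this, hε2]; noncomm_ring
  have expand : (ε + (1 + ε) * B * (1 - ε)) * (ε + (1 + ε) * B * (1 - ε))
      = ε * ε + (ε * (1 + ε)) * B * (1 - ε) + (1 + ε) * B * ((1 - ε) * ε)
        + (1 + ε) * B * ((1 - ε) * (1 + ε)) * B * (1 - ε) := by
    noncomm_ring
  rw [expand, hε2, h0, h1, h2]
  noncomm_ring
end

section
/- Let ε and ε⋆ be Hermitian involutions on ℂ^{2N} with trace ε = 2ν and trace ε⋆ = 2ν⋆ (ν, ν⋆ integers). Then the rank of 1 + εε⋆ is at most 2N − |ν − ν⋆|, so the kernel of 1 + εε⋆ has dimension at least |ν − ν⋆|. -/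
open Matrix FiniteDimensional

lemma rank_eq_trace_of_idem {n : ℕ} (P : Matrix (Fin n) (Fin n) ℂ)
    (h : P * P = P) : (P.rank : ℂ) = P.trace := by
  have hf : P.mulVecLin ∘ₗ P.mulVecLin = P.mulVecLin := by
    rw [← Matrix.mulVecLin_mul, h]
  have hproj : LinearMap.IsProj (LinearMap.range P.mulVecLin) P.mulVecLin := by
    constructor
    · intro x; exact LinearMap.mem_range_self _ x
    · rintro x ⟨y, rfl⟩
      exact congrFun (congrArg DFunLike.coe hf) y
  have := hproj.trace
  rw [Matrix.rank, ← this,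
    LinearMap.trace_eq_matrix_trace ℂ (Pi.basisFun ℂ (Fin n)),
    LinearMap.toMatrix_eq_toMatrix']
  congr 1
  exact LinearMap.toMatrix'_toLin' P

lemma rank_add_le' {n : ℕ} (A B : Matrix (Fin n) (Fin n) ℂ) :
    (A + B).rank ≤ A.rank + B.rank := by
  rw [Matrix.rank, Matrix.rank, Matrix.rank, Matrix.mulVecLin_add]
  refine le_trans (Submodule.finrank_mono ?_)
    (Submodule.finrank_add_le_finrank_add_finrank _ _)
  intro x hx
  obtain ⟨y, rfl⟩ := hx
  exact Submodule.add_mem_sup (LinearMap.mem_range_self _ y) (LinearMap.mem_range_self _ y)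

lemma rank_mul_left_cancel {n : ℕ} (U V A : Matrix (Fin n) (Fin n) ℂ) (hU : V * U = 1) :
    (U * A).rank = A.rank := by
  refine le_antisymm (Matrix.rank_mul_le_right U A) ?_
  have : A = V * (U * A) := by rw [← Matrix.mul_assoc, hU, Matrix.one_mul]
  conv_lhs => rw [this]
  exact Matrix.rank_mul_le_right V (U * A)

lemma rank_smul' {n : ℕ} (c : ℂ) (hc : c ≠ 0) (A : Matrix (Fin n) (Fin n) ℂ) :
    (c • A).rank = A.rank := by
  have h : (c⁻¹ • (1 : Matrix (Fin n) (Fin n) ℂ)) * (c • (1 : Matrix (Fin n) (Fin n) ℂ)) = 1 := by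
    rw [Matrix.smul_mul, Matrix.mul_smul, smul_smul, Matrix.one_mul, inv_mul_cancel₀ hc, one_smul]
  have h2 : c • A = (c • (1 : Matrix (Fin n) (Fin n) ℂ)) * A := by
    rw [Matrix.smul_mul, Matrix.one_mul]
  rw [h2, rank_mul_left_cancel _ _ _ h]

/-- rank (1 + ε) computed from the trace of an involution. -/
lemma rank_one_add_invol {n : ℕ} (ε : Matrix (Fin n) (Fin n) ℂ) (hε2 : ε * ε = 1) :
    ((1 + ε).rank : ℂ) * 2 = (n : ℂ) + ε.trace := by
  have hsq : (1 + ε) * (1 + ε) = (2:ℂ) • (1 + ε) := by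
    rw [Matrix.add_mul, Matrix.one_mul, Matrix.mul_add, Matrix.mul_one, hε2, two_smul]
    abel
  have hP : ((1/2 : ℂ) • (1 + ε)) * ((1/2 : ℂ) • (1 + ε)) = (1/2 : ℂ) • (1 + ε) := by
    rw [Matrix.smul_mul, Matrix.mul_smul, smul_smul, hsq, smul_smul]
    norm_num
  have htr := rank_eq_trace_of_idem _ hP
  rw [rank_smul' _ (by norm_num) _] at htr
  have h5 : ((1/2 : ℂ) • (1 + ε)).trace = (1/2 : ℂ) * ((n : ℂ) + ε.trace) := by
    rw [Matrix.trace_smul, Matrix.trace_add, Matrix.trace_one]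
    simp [smul_eq_mul, Fintype.card_fin]
  rw [h5] at htr
  linear_combination 2 * htr

/-- If ε and ε⋆ are Hermitian involutions on ℂ^(2N) with traces 2ν and 2ν⋆, then
rank (1 + εε⋆) ≤ 2N − |ν − ν⋆|, so the kernel of 1 + εε⋆ has dimension at
least |ν − ν⋆|. -/
theorem stmt5 {N : ℕ} (hN : 0 < N) (ε εs : Matrix (Fin (2 * N)) (Fin (2 * N)) ℂ)
    (hεH : εᴴ = ε) (hε2 : ε * ε = 1)
    (hεsH : εsᴴ = εs) (hεs2 : εs * εs = 1)
    (ν νs : ℤ) (htr : ε.trace = (2 * ν : ℤ)) (htrs : εs.trace = (2 * νs : ℤ)) :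
    ((1 + ε * εs).rank : ℤ) ≤ 2 * N - |ν - νs|
      ∧ |ν - νs| ≤ (Module.finrank ℂ (LinearMap.ker (1 + ε * εs).mulVecLin) : ℤ) := by
  have castrank : ∀ (A : Matrix (Fin (2*N)) (Fin (2*N)) ℂ) (m : ℤ),
      (A.rank : ℂ) * 2 = ((2 * m : ℤ) : ℂ) → (A.rank : ℤ) = m := by
    intro A m h
    have : ((A.rank : ℤ) : ℂ) * 2 = (m : ℂ) * 2 := by push_cast at h ⊢; linear_combination h
    exact_mod_cast mul_right_cancel₀ (two_ne_zero (α := ℂ)) this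
  -- rank (1+ε) = N + ν
  have h1 : ((1 + ε).rank : ℤ) = N + ν := by
    apply castrank
    rw [rank_one_add_invol ε hε2, htr]; push_cast; ring
  have h1s : ((1 + εs).rank : ℤ) = N + νs := by
    apply castrank
    rw [rank_one_add_invol εs hεs2, htrs]; push_cast; ring
  have h2 : ((1 + (-ε)).rank : ℤ) = N - ν := by
    apply castrank
    have : (-ε) * (-ε) = 1 := by rw [neg_mul_neg, hε2]
    rw [rank_one_add_invol (-ε) this, Matrix.trace_neg, htr]; push_cast; ring
  have h2s : ((1 + (-εs)).rank : ℤ) = N - νs := by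
    apply castrank
    have : (-εs) * (-εs) = 1 := by rw [neg_mul_neg, hεs2]
    rw [rank_one_add_invol (-εs) this, Matrix.trace_neg, htrs]; push_cast; ring
  -- rank (1 + ε εs) = rank (ε + εs)
  have key : (1 + ε * εs).rank = (ε + εs).rank := by
    have : (1 : Matrix (Fin (2*N)) (Fin (2*N)) ℂ) + ε * εs = ε * (ε + εs) := by
      rw [Matrix.mul_add, hε2]
    rw [this, rank_mul_left_cancel ε ε _ hε2]
  -- two upper bounds on rank (ε + εs)
  have b1 : ((ε + εs).rank : ℤ) ≤ 2 * N + (ν - νs) := by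
    have hd : ε + εs = (1 + ε) + (-(1 + (-εs))) := by module
    have hneg : (-(1 + (-εs))).rank = (1 + (-εs)).rank := by
      have : (-(1 + (-εs))) = (-1 : ℂ) • (1 + (-εs)) := (neg_one_smul ℂ _).symm
      rw [this, rank_smul' _ (by norm_num) _]
    have := rank_add_le' (1 + ε) (-(1 + (-εs)))
    rw [← hd, hneg] at this
    have : ((ε + εs).rank : ℤ) ≤ ((1 + ε).rank : ℤ) + ((1 + (-εs)).rank : ℤ) := by
      exact_mod_cast this
    rw [h1, h2s] at this; linarith
  have b2 : ((ε + εs).rank : ℤ) ≤ 2 * N - (ν - νs) := by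
    have hd : ε + εs = (1 + εs) + (-(1 + (-ε))) := by module
    have hneg : (-(1 + (-ε))).rank = (1 + (-ε)).rank := by
      have : (-(1 + (-ε))) = (-1 : ℂ) • (1 + (-ε)) := (neg_one_smul ℂ _).symm
      rw [this, rank_smul' _ (by norm_num) _]
    have := rank_add_le' (1 + εs) (-(1 + (-ε)))
    rw [← hd, hneg] at this
    have : ((ε + εs).rank : ℤ) ≤ ((1 + εs).rank : ℤ) + ((1 + (-ε)).rank : ℤ) := by
      exact_mod_cast this
    rw [h1s, h2] at this; linarith
  have hub : ((1 + ε * εs).rank : ℤ) ≤ 2 * N - |ν - νs| := by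
    rw [key]
    rcases abs_cases (ν - νs) with ⟨h, _⟩ | ⟨h, _⟩ <;> rw [h] <;> [exact b2; linarith [b1]]
  refine ⟨hub, ?_⟩
  -- rank-nullity
  have hrn := LinearMap.finrank_range_add_finrank_ker (1 + ε * εs).mulVecLin
  rw [Module.finrank_pi ℂ] at hrn
  have : (1 + ε * εs).rank + Module.finrank ℂ (LinearMap.ker (1 + ε * εs).mulVecLin)
      = Fintype.card (Fin (2 * N)) := hrn
  rw [Fintype.card_fin] at this
  have : ((1 + ε * εs).rank : ℤ) + (Module.finrank ℂ (LinearMap.ker (1 + ε * εs).mulVecLin) : ℤ)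
      = 2 * N := by exact_mod_cast this
  linarith [hub, abs_nonneg (ν - νs)]
end

section
/- Let ε and ε⋆ be Hermitian involutions with trace ε = 2ν and trace ε⋆ = 2ν⋆. If ν ≠ ν⋆, then 1 + εε⋆ is not invertible. -/
open Matrix

/-! For involutions `e`, `f` the element `e + f = e * (1 + e * f)` intertwines them,
`e * (e + f) = (e + f) * f`; so if `1 + e * f` is invertible then `e` and `f` are similar
and have the same trace. -/

theorem mul_add_eq_add_mul_of_mul_self_eq_one {R : Type*} [Ring R] {e f : R}
    (he : e * e = 1) (hf : f * f = 1) : e * (e + f) = (e + f) * f := by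
  rw [mul_add, add_mul, he, hf, add_comm]

theorem IsUnit.add_of_one_add_mul {R : Type*} [Ring R] {e f : R} (he : e * e = 1)
    (h : IsUnit (1 + e * f)) : IsUnit (e + f) := by
  have hsum : e + f = e * (1 + e * f) := by rw [mul_add, mul_one, ← mul_assoc, he, one_mul]
  rw [hsum]
  exact (show IsUnit e from ⟨⟨e, e, he, he⟩, rfl⟩).mul h

theorem Matrix.trace_eq_of_isUnit_one_add_mul {n R : Type*} [Fintype n] [DecidableEq n]
    [CommRing R] {e f : Matrix n n R} (he : e * e = 1) (hf : f * f = 1)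
    (h : IsUnit (1 + e * f)) : e.trace = f.trace := by
  have hunit : IsUnit (e + f) := h.add_of_one_add_mul he
  have hconj : e = (e + f) * f * (e + f)⁻¹ := by
    rw [← mul_add_eq_add_mul_of_mul_self_eq_one he hf, mul_assoc,
      mul_nonsing_inv _ ((isUnit_iff_isUnit_det _).mp hunit), mul_one]
  rw [hconj, trace_conj hunit]

theorem stmt7_general {N : ℕ} (ε εs : Matrix (Fin (2 * N)) (Fin (2 * N)) ℂ)
    (hε2 : ε * ε = 1)
    (hεs2 : εs * εs = 1)
    (ν νs : ℤ) (htr : ε.trace = (2 * ν : ℤ)) (htrs : εs.trace = (2 * νs : ℤ))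
    (hne : ν ≠ νs) :
    ¬ IsUnit (1 + ε * εs) := by
  intro h
  have htreq := Matrix.trace_eq_of_isUnit_one_add_mul hε2 hεs2 h
  rw [htr, htrs, Int.cast_inj] at htreq
  omega

/-- If ε and ε⋆ are Hermitian involutions with trace ε = 2ν, trace ε⋆ = 2ν⋆ and
ν ≠ ν⋆, then 1 + εε⋆ is not invertible. -/
theorem stmt7 {N : ℕ} (ε εs : Matrix (Fin (2 * N)) (Fin (2 * N)) ℂ)
    (hεH : εᴴ = ε) (hε2 : ε * ε = 1)
    (hεsH : εsᴴ = εs) (hεs2 : εs * εs = 1)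
    (ν νs : ℤ) (htr : ε.trace = (2 * ν : ℤ)) (htrs : εs.trace = (2 * νs : ℤ))
    (hne : ν ≠ νs) :
    ¬ IsUnit (1 + ε * εs) :=
  stmt7_general ε εs hε2 hεs2 ν νs htr htrs hne
end

section
/- Let ε and ε⋆ be Hermitian involutions with trace ε = 2ν and trace ε⋆ = 2ν⋆, and let P₀ be the orthogonal projection onto the kernel of Δ⁻ = 1 − εε⋆. Then trace(ε P₀) = ν + ν⋆, i.e., the difference between the number of kernel vectors of Δ⁻ with ε-eigenvalue +1 and those with ε-eigenvalue −1 equals ν + ν⋆. -/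
open Matrix

private lemma mat_eq_zero_of_mulVec {n : Type*} [Fintype n] [DecidableEq n]
    (A : Matrix n n ℂ) (h : ∀ v, A *ᵥ v = 0) : A = 0 := by
  ext i j
  have := congrFun (h (Pi.single j 1)) i
  simpa using this

/-- If ε and ε⋆ are Hermitian involutions on ℂ^(2N) with traces 2ν and 2ν⋆, and
P₀ is the orthogonal projection onto the kernel of Δ⁻ = 1 − εε⋆, then
trace(ε P₀) = ν + ν⋆. -/
theorem stmt12 {N : ℕ} (ε εs P₀ : Matrix (Fin (2 * N)) (Fin (2 * N)) ℂ)
    (hεH : εᴴ = ε) (hε2 : ε * ε = 1)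
    (hεsH : εsᴴ = εs) (hεs2 : εs * εs = 1)
    (ν νs : ℤ) (htr : ε.trace = (2 * ν : ℤ)) (htrs : εs.trace = (2 * νs : ℤ))
    (hPidem : P₀ * P₀ = P₀) (hPherm : P₀ᴴ = P₀)
    (hPrange : LinearMap.range P₀.mulVecLin = LinearMap.ker (1 - ε * εs).mulVecLin) :
    (ε * P₀).trace = (ν + νs : ℤ) := by
  -- (1 - ε εs) P₀ = 0
  have hUP : (1 - ε * εs) * P₀ = 0 := by
    apply mat_eq_zero_of_mulVec
    intro v
    have hmem : P₀ *ᵥ v ∈ LinearMap.range P₀.mulVecLin := ⟨v, rfl⟩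
    rw [hPrange, LinearMap.mem_ker, mulVecLin_apply] at hmem
    rw [← mulVec_mulVec]
    exact hmem
  have hUP0 : ε * εs * P₀ = P₀ := by
    have h := hUP
    rw [sub_mul, one_mul, sub_eq_zero] at h
    exact h.symm
  -- εs P₀ = ε P₀
  have hεsP : εs * P₀ = ε * P₀ := by
    have h := congrArg (fun X => ε * X) hUP0
    simpa [← mul_assoc, hε2] using h
  -- D = ε - εs kills P₀ on both sides
  have hDP : (ε - εs) * P₀ = 0 := by rw [sub_mul, hεsP, sub_self]
  have hPD : P₀ * (ε - εs) = 0 := by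
    have h := congrArg conjTranspose hDP
    simpa [conjTranspose_mul, hεH, hεsH, hPherm] using h
  -- M = D + P₀ is invertible
  set M : Matrix (Fin (2 * N)) (Fin (2 * N)) ℂ := (ε - εs) + P₀ with hM
  have hMH : Mᴴ = M := by
    simp [hM, conjTranspose_add, hεH, hεsH, hPherm]
  have hMunit : IsUnit M := by
    rw [← mulVec_injective_iff_isUnit]
    intro x y hxy
    have key : ∀ v, M *ᵥ v = 0 → v = 0 := by
      intro v hv
      have hPv : P₀ *ᵥ v = 0 := by
        have h := congrArg (fun w => P₀ *ᵥ w) hv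
        simp only [mulVec_mulVec] at h
        rw [mul_add, hPD, hPidem, zero_add] at h
        simpa using h
      have hDv : (ε - εs) *ᵥ v = 0 := by
        have : ((ε - εs) + P₀) *ᵥ v = 0 := hv
        rw [add_mulVec, hPv, add_zero] at this
        exact this
      -- v is in the kernel of 1 - ε εs
      have hker : (1 - ε * εs) *ᵥ v = 0 := by
        have heq : ε *ᵥ v = εs *ᵥ v := by
          rw [sub_mulVec, sub_eq_zero] at hDv
          exact hDv
        rw [sub_mulVec, one_mulVec, ← mulVec_mulVec, ← heq, mulVec_mulVec, hε2,
          one_mulVec, sub_self]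
      have hmem : v ∈ LinearMap.range P₀.mulVecLin := by
        rw [hPrange, LinearMap.mem_ker, mulVecLin_apply]
        exact hker
      obtain ⟨w, hw⟩ := hmem
      rw [mulVecLin_apply] at hw
      have : P₀ *ᵥ v = v := by
        rw [← hw, mulVec_mulVec, hPidem]
      rw [hPv] at this
      exact this.symm
    have := key (x - y) (by rw [mulVec_sub, hxy, sub_self])
    exact sub_eq_zero.mp this
  have hMM : M * M⁻¹ = 1 := mul_nonsing_inv M ((isUnit_iff_isUnit_det M).mp hMunit)
  have hMM' : M⁻¹ * M = 1 := nonsing_inv_mul M ((isUnit_iff_isUnit_det M).mp hMunit)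
  -- M (1 - P₀) = ε - εs
  have hMQ : M * (1 - P₀) = ε - εs := by
    rw [mul_sub, mul_one, hM, add_mul, hDP, hPidem, zero_add, add_sub_cancel_right]
  have hQ1 : (1 : Matrix (Fin (2 * N)) (Fin (2 * N)) ℂ) - P₀ = M⁻¹ * (ε - εs) := by
    rw [← hMQ, ← mul_assoc, hMM', one_mul]
  have hMinvH : M⁻¹ᴴ = M⁻¹ := by rw [conjTranspose_nonsing_inv, hMH]
  have hQ2 : (1 : Matrix (Fin (2 * N)) (Fin (2 * N)) ℂ) - P₀ = (ε - εs) * M⁻¹ := by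
    have h := congrArg conjTranspose hQ1
    simpa [conjTranspose_mul, hεH, hεsH, hPherm, hMinvH] using h
  -- anticommutation
  have hAC : (ε + εs) * (ε - εs) = -((ε - εs) * (ε + εs)) := by
    rw [add_mul, mul_sub, mul_sub, sub_mul, mul_add, mul_add, hε2, hεs2]
    abel
  -- trace of (ε+εs)(1-P₀) is zero
  have hT0 : ((ε + εs) * (1 - P₀)).trace = 0 := by
    have h1 : ((ε + εs) * (1 - P₀)).trace = ((ε + εs) * M⁻¹ * (ε - εs)).trace := by
      rw [hQ1, ← mul_assoc]
    have h2 : ((ε + εs) * (1 - P₀)).trace = -(((ε + εs) * M⁻¹ * (ε - εs)).trace) := by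
      rw [hQ2, ← mul_assoc, hAC, neg_mul, trace_neg, mul_assoc,
        trace_mul_comm]
    have h := h1.symm.trans h2
    have h0 : ((ε + εs) * M⁻¹ * (ε - εs)).trace = 0 := by linear_combination h / 2
    rw [h1, h0]
  -- hence trace((ε+εs) P₀) = trace ε + trace εs
  have hsplit : ((ε + εs) * P₀).trace = (ε + εs).trace - ((ε + εs) * (1 - P₀)).trace := by
    rw [mul_sub, mul_one, trace_sub]
    ring
  have htrP : ((ε + εs) * P₀).trace = (2 * ν : ℤ) + (2 * νs : ℤ) := by
    rw [hsplit, hT0, sub_zero, trace_add, htr, htrs]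
  have hdouble : ((ε + εs) * P₀).trace = 2 * (ε * P₀).trace := by
    rw [add_mul, hεsP, trace_add]; ring
  have key : (2 : ℂ) * (ε * P₀).trace = 2 * ((ν : ℂ) + (νs : ℂ)) := by
    rw [← hdouble, htrP]
    push_cast
    ring
  have := mul_left_cancel₀ (two_ne_zero (α := ℂ)) key
  rw [this]
  push_cast
  ring
end

section
/- Let ε and ε⋆ be Hermitian involutions with trace ε = 2ν and trace ε⋆ = 2ν⋆, and let P₀⁺ be the orthogonal projection onto the kernel of Δ⁺ = 1 + εε⋆. Then trace(ε P₀⁺) = ν − ν⋆. -/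
/-!
Put `S = ε + ε⋆` and `D = ε - ε⋆`. Then `S D = -D S` and `Δ⁺ = ε S`, so `P₀⁺` projects
onto `ker S`; from `S P₀⁺ = 0` we get `ε⋆ P₀⁺ = -ε P₀⁺`, hence `D P₀⁺ = 2 ε P₀⁺`. By a dimension
count the range of `S` is `ker P₀⁺`; `S` is invertible there, and the compression of `D` to it
anticommutes with that invertible map, so it has trace zero. Therefore `2ν - 2ν⋆ = tr D = tr (D P₀⁺) = 2 tr (ε P₀⁺)`.
-/

open Matrix

theorem LinearMap.range_eq_ker_of_comp_eq_zero_of_range_eq_ker {K V : Type*} [Field K]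
    [AddCommGroup V] [Module K V] [FiniteDimensional K V] {f g : V →ₗ[K] V}
    (hgf : g ∘ₗ f = 0) (hg : range g = ker f) : range f = ker g := by
  refine Submodule.eq_of_le_of_finrank_eq (range_le_ker_iff.mpr hgf) ?_
  have hf := finrank_range_add_finrank_ker f
  have hg' := finrank_range_add_finrank_ker g
  rw [hg] at hg'
  omega

namespace Matrix

variable {n R : Type*} [Fintype n]

theorem trace_mul_eq_zero_of_anticommute [CommRing R] [IsAddTorsionFree R]
    {S D T Q : Matrix n n R} (hSD : S * D = -(D * S)) (hST : S * T = Q) (hTS : T * S = Q) :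
    (D * Q).trace = 0 := by
  refine self_eq_neg.mp ?_
  calc (D * Q).trace = (D * S * T).trace := by rw [mul_assoc, hST]
    _ = -(D * T * S).trace := by
      rw [← neg_eq_iff_eq_neg.mpr hSD, neg_mul, trace_neg, mul_assoc, trace_mul_comm]
    _ = -(D * Q).trace := by rw [mul_assoc, hTS]

variable [DecidableEq n]

theorem mul_eq_zero_iff_range_le_ker [CommRing R] {A B : Matrix n n R} :
    A * B = 0 ↔ LinearMap.range B.mulVecLin ≤ LinearMap.ker A.mulVecLin := by
  rw [LinearMap.range_le_ker_iff, ← toLin'_apply', ← toLin'_apply', ← toLin'_mul,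
    LinearEquiv.map_eq_zero_iff]

theorem exists_mul_eq_of_range_le [CommRing R] {A B : Matrix n n R}
    (h : LinearMap.range B.mulVecLin ≤ LinearMap.range A.mulVecLin) : ∃ T, A * T = B := by
  choose w hw using fun j => h ⟨Pi.single j 1, rfl⟩
  refine ⟨of fun i j => w j i, ?_⟩
  ext i j
  rw [← col_apply B j i, ← mulVec_single_one, ← mulVecLin_apply, ← hw j]
  rfl

theorem ker_mulVecLin_mul_of_mul_eq_one [CommRing R] {A A' B : Matrix n n R} (h : A' * A = 1) :
    LinearMap.ker (A * B).mulVecLin = LinearMap.ker B.mulVecLin := by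
  refine le_antisymm (fun v hv => ?_) (fun v hv => ?_) <;>
    simp only [LinearMap.mem_ker, mulVecLin_apply, ← mulVec_mulVec] at hv ⊢
  · rw [← one_mulVec (B *ᵥ v), ← h, ← mulVec_mulVec, hv, mulVec_zero]
  · rw [hv, mulVec_zero]

theorem trace_eq_trace_mul_of_anticommute {𝕜 : Type*} [Field 𝕜] [StarRing 𝕜] [CharZero 𝕜]
    {S D P : Matrix n n 𝕜} (hS : S.IsHermitian) (hP : P.IsHermitian) (hPP : P * P = P)
    (hrange : LinearMap.range P.mulVecLin = LinearMap.ker S.mulVecLin) (hSD : S * D = -(D * S)) :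
    D.trace = (D * P).trace := by
  have hSP : S * P = 0 := mul_eq_zero_iff_range_le_ker.mpr hrange.le
  have hPS : P * S = 0 := by simpa [hS.eq, hP.eq] using congrArg conjTranspose hSP
  have hPQ : P * (1 - P) = 0 := by rw [mul_sub, mul_one, hPP, sub_self]
  have hrangeS : LinearMap.range S.mulVecLin = LinearMap.ker P.mulVecLin := by
    simp only [← toLin'_apply'] at hrange ⊢
    exact LinearMap.range_eq_ker_of_comp_eq_zero_of_range_eq_ker
      (by rw [← toLin'_mul, hPS, map_zero]) hrange
  obtain ⟨T, hT⟩ := exists_mul_eq_of_range_le (A := S) (B := 1 - P)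
    (hrangeS ▸ mul_eq_zero_iff_range_le_ker.mp hPQ)
  have hQ : (1 - P)ᴴ = 1 - P := by rw [conjTranspose_sub, conjTranspose_one, hP.eq]
  have hTS : Tᴴ * S = 1 - P := by rw [← hS.eq, ← conjTranspose_mul, hT, hQ]
  -- `T` need not commute with `S`; the symmetrised `Tᴴ * S * T` does.
  have hTr := trace_mul_eq_zero_of_anticommute hSD (T := Tᴴ * S * T)
    (by rw [← mul_assoc, hTS, mul_sub, mul_one, hSP, sub_zero, hT])
    (by rw [mul_assoc Tᴴ S T, hT, mul_assoc, sub_mul, one_mul, hPS, sub_zero, hTS])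
  rwa [mul_sub, mul_one, trace_sub, sub_eq_zero] at hTr

end Matrix

/-- If ε and ε⋆ are Hermitian involutions on ℂ^(2N) with traces 2ν and 2ν⋆, and
P₀⁺ is the orthogonal projection onto the kernel of Δ⁺ = 1 + εε⋆, then
trace(ε P₀⁺) = ν − ν⋆. -/
theorem stmt13 {N : ℕ} (ε εs P₀ : Matrix (Fin (2 * N)) (Fin (2 * N)) ℂ)
    (hεH : εᴴ = ε) (hε2 : ε * ε = 1)
    (hεsH : εsᴴ = εs) (hεs2 : εs * εs = 1)
    (ν νs : ℤ) (htr : ε.trace = (2 * ν : ℤ)) (htrs : εs.trace = (2 * νs : ℤ))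
    (hPidem : P₀ * P₀ = P₀) (hPherm : P₀ᴴ = P₀)
    (hPrange : LinearMap.range P₀.mulVecLin = LinearMap.ker (1 + ε * εs).mulVecLin) :
    (ε * P₀).trace = (ν - νs : ℤ) := by
  have hΔ : 1 + ε * εs = ε * (ε + εs) := by rw [mul_add, hε2]
  rw [hΔ, ker_mulVecLin_mul_of_mul_eq_one hε2] at hPrange
  have hanti : (ε + εs) * (ε - εs) = -((ε - εs) * (ε + εs)) := by
    simp only [mul_add, add_mul, mul_sub, sub_mul, hε2, hεs2]
    abel
  have htrace := trace_eq_trace_mul_of_anticommute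
    (by rw [IsHermitian, conjTranspose_add, hεH, hεsH]) hPherm hPidem hPrange hanti
  have hεsP : εs * P₀ = -(ε * P₀) :=
    eq_neg_of_add_eq_zero_right (by rw [← add_mul, mul_eq_zero_iff_range_le_ker.mpr hPrange.le])
  rw [sub_mul, hεsP, sub_neg_eq_add, trace_add, trace_sub, htr, htrs] at htrace
  push_cast at htrace ⊢
  linear_combination -htrace / 2
end

section
/- Let ε and ε⋆ be involutions on a finite-dimensional complex vector space such that 1 + εε⋆ is invertible, and let Ê = 1 − (1 − ε⋆)(1 + εε⋆)⁻¹(1 − ε). Then trace Ê = trace ε + trace((1+ε)(ε+ε⋆)⁻¹(1−ε)); in particular if ε, ε⋆ are Hermitian with trace ε = trace ε⋆ = 2ν, then trace Ê = 2ν. -/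
open Matrix

/-- For involutions ε, ε⋆ with 1 + εε⋆ invertible and
Ê = 1 − (1−ε⋆)(1+εε⋆)⁻¹(1−ε), one has
trace Ê = trace ε + trace((1+ε)(ε+ε⋆)⁻¹(1−ε)); in particular if ε, ε⋆ are
Hermitian with trace ε = trace ε⋆ = 2ν then trace Ê = 2ν. -/
theorem stmt14 {n : ℕ} (ε εs : Matrix (Fin n) (Fin n) ℂ)
    (hε2 : ε * ε = 1) (hεs2 : εs * εs = 1)
    (hU : IsUnit (1 + ε * εs)) :
    (1 - (1 - εs) * (1 + ε * εs)⁻¹ * (1 - ε)).trace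
        = ε.trace + ((1 + ε) * (ε + εs)⁻¹ * (1 - ε)).trace
    ∧ ∀ ν : ℤ, εᴴ = ε → εsᴴ = εs → ε.trace = (2 * ν : ℤ) → εs.trace = (2 * ν : ℤ) →
        (1 - (1 - εs) * (1 + ε * εs)⁻¹ * (1 - ε)).trace = (2 * ν : ℤ) := by
  set A := 1 + ε * εs with hA
  have hdet : IsUnit A.det := (Matrix.isUnit_iff_isUnit_det A).mp hU
  have hAinv : A * A⁻¹ = 1 := Matrix.mul_nonsing_inv A hdet
  have hinvA : A⁻¹ * A = 1 := Matrix.nonsing_inv_mul A hdet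
  -- ε * A = A * εs = ε + εs
  have hcomm : ε * A = A * εs := by
    rw [hA]; noncomm_ring
    rw [← mul_assoc, hε2, hεs2, one_mul, mul_one, add_comm]
  have hswap : A⁻¹ * ε = εs * A⁻¹ := by
    calc A⁻¹ * ε = A⁻¹ * ε * (A * A⁻¹) := by rw [hAinv, mul_one]
    _ = A⁻¹ * (ε * A) * A⁻¹ := by noncomm_ring
    _ = A⁻¹ * (A * εs) * A⁻¹ := by rw [hcomm]
    _ = (A⁻¹ * A) * (εs * A⁻¹) := by noncomm_ring
    _ = εs * A⁻¹ := by rw [hinvA, one_mul]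
  -- (ε + εs)⁻¹ = A⁻¹ * ε
  have hsum : (ε + εs)⁻¹ = A⁻¹ * ε := by
    apply Matrix.inv_eq_left_inv
    have : (A⁻¹ * ε) * (ε + εs) = A⁻¹ * (ε * ε + ε * εs) := by noncomm_ring
    rw [this, hε2, ← hA, hinvA]
  -- key matrix identity
  have hkey : 1 - (1 - εs) * A⁻¹ * (1 - ε) = ε + (1 + ε) * (ε + εs)⁻¹ * (1 - ε) := by
    rw [hsum]
    have h2 : (1 + ε) * (A⁻¹ * ε) = (1 + ε) * (εs * A⁻¹) := by rw [hswap]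
    have : (1 - εs) * A⁻¹ * (1 - ε) + (1 + ε) * (A⁻¹ * ε) * (1 - ε)
        = ((1 - εs) * A⁻¹ + (1 + ε) * (εs * A⁻¹)) * (1 - ε) := by
      rw [h2]; noncomm_ring
    have hM : (1 - εs) * A⁻¹ + (1 + ε) * (εs * A⁻¹) = 1 := by
      have : (1 - εs) * A⁻¹ + (1 + ε) * (εs * A⁻¹) = (1 + ε * εs) * A⁻¹ := by noncomm_ring
      rw [this, ← hA, hAinv]
    have h3 : (1 - εs) * A⁻¹ * (1 - ε) + (1 + ε) * (A⁻¹ * ε) * (1 - ε) = 1 - ε := by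
      rw [this, hM, one_mul]
    have h4 : (1 + ε) * (A⁻¹ * ε) * (1 - ε)
        = 1 - ε - (1 - εs) * A⁻¹ * (1 - ε) := eq_sub_of_add_eq' h3
    rw [h4]; abel
  have hzero : ((1 + ε) * (ε + εs)⁻¹ * (1 - ε)).trace = 0 := by
    have hc : ((1 + ε) * (ε + εs)⁻¹ * (1 - ε)).trace
        = ((ε + εs)⁻¹ * ((1 - ε) * (1 + ε))).trace := by
      rw [Matrix.trace_mul_cycle, Matrix.trace_mul_cycle, Matrix.mul_assoc]
    have hz : (1 - ε) * (1 + ε) = 0 := by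
      have : (1 - ε) * (1 + ε) = 1 - ε * ε := by noncomm_ring
      rw [this, hε2, sub_self]
    rw [hc, hz, Matrix.mul_zero, Matrix.trace_zero]
  have hmain : (1 - (1 - εs) * A⁻¹ * (1 - ε)).trace
      = ε.trace + ((1 + ε) * (ε + εs)⁻¹ * (1 - ε)).trace := by
    rw [hkey, Matrix.trace_add]
  refine ⟨hmain, fun ν _ _ htr _ => ?_⟩
  rw [hmain, hzero, add_zero, htr]
end

section
/- Let H be a Hermitian matrix with no zero eigenvalues and T = exp(−H). Then the limit as L → ∞ of (1 − T^L)(1 + T^L)⁻¹ equals ε(H) = H(H²)^{−1/2}, the sign function of H. -/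
/-!
Everything in sight is a function of `H` in the sense of the continuous functional calculus:
`(1 - T^L)(1 + T^L)⁻¹ = φ_L(H)` with `φ_L(x) = (1 - e^{-Lx}) / (1 + e^{-Lx}) = tanh(Lx/2)`, and
`(H²)^{1/2} = |H|`, so that `H (H²)^{-1/2} = sign(H)`. For `x ≠ 0` we have `φ_L(x) → sign x`;
the spectrum of `H` is finite and avoids `0`, so this convergence is uniform on the spectrum, and
the functional calculus turns it into convergence of the matrices.
-/

open Matrix Filter
open scoped ComplexOrder

/-- The square root of a positive semidefinite matrix (Mathlib's removed `PosSemidef.sqrt`,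
restated with its old definition). -/
noncomputable def Matrix.PosSemidef.sqrt {m 𝕜 : Type*} [Fintype m] [DecidableEq m] [RCLike 𝕜]
    {A : Matrix m m 𝕜} (hA : A.PosSemidef) : Matrix m m 𝕜 :=
  hA.1.eigenvectorUnitary.1 * diagonal ((↑) ∘ Real.sqrt ∘ hA.1.eigenvalues) *
    (star hA.1.eigenvectorUnitary : Matrix m m 𝕜)

theorem tendsto_cfc_fun_of_finite_spectrum {R A ι : Type*} {p : A → Prop} [CommSemiring R]
    [StarRing R] [MetricSpace R] [IsTopologicalSemiring R] [ContinuousStar R] [Ring A]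
    [StarRing A] [TopologicalSpace A] [Algebra R A] [ContinuousFunctionalCalculus R A p]
    {l : Filter ι} {F : ι → R → R} {f : R → R} {a : A} (hfin : (spectrum R a).Finite)
    (hF : ∀ x ∈ spectrum R a, Tendsto (fun i => F i x) l (nhds (f x))) :
    Tendsto (fun i => cfc (F i) a) l (nhds (cfc f a)) := by
  refine tendsto_cfc_fun ?_ (.of_forall fun i => hfin.continuousOn (F i))
  rw [Metric.tendstoUniformlyOn_iff]
  intro ε hε
  refine (Filter.eventually_all_finite hfin).2 fun x hx => ?_
  simpa only [dist_comm] using Metric.tendsto_nhds.1 (hF x hx) ε hε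

theorem cfc_mul_ringInverse_cfc {R A : Type*} {p : A → Prop} [Field R] [StarRing R]
    [MetricSpace R] [IsTopologicalSemiring R] [ContinuousStar R] [ContinuousInv₀ R] [Ring A]
    [StarRing A] [TopologicalSpace A] [Algebra R A] [ContinuousFunctionalCalculus R A p]
    (f g : R → R) (a : A) (hg : ∀ x ∈ spectrum R a, g x ≠ 0)
    (hf : ContinuousOn f (spectrum R a) := by cfc_cont_tac)
    (hg' : ContinuousOn g (spectrum R a) := by cfc_cont_tac) (ha : p a := by cfc_tac) :
    cfc f a * Ring.inverse (cfc g a) = cfc (fun x => f x / g x) a := by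
  rw [← cfc_inv g a hg, ← cfc_mul f (fun x => (g x)⁻¹) a hf (hg'.inv₀ hg)]
  simp only [div_eq_mul_inv]

section PowRatio

variable {𝕜 : Type*} [NormedField 𝕜]

theorem tendsto_one_sub_pow_div_one_add_pow_of_norm_lt_one {q : 𝕜} (hq : ‖q‖ < 1) :
    Tendsto (fun L : ℕ => (1 - q ^ L) / (1 + q ^ L)) atTop (nhds 1) := by
  have h := tendsto_pow_atTop_nhds_zero_of_norm_lt_one hq
  simpa [Pi.div_def] using
    (tendsto_const_nhds.sub h).div (tendsto_const_nhds.add h) (by simp : (1 : 𝕜) + 0 ≠ 0)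

theorem tendsto_one_sub_pow_div_one_add_pow_of_one_lt_norm {q : 𝕜} (hq : 1 < ‖q‖) :
    Tendsto (fun L : ℕ => (1 - q ^ L) / (1 + q ^ L)) atTop (nhds (-1)) := by
  have hq0 : q ≠ 0 := norm_pos_iff.1 (one_pos.trans hq)
  have hinv : ‖q⁻¹‖ < 1 := by rw [norm_inv]; exact inv_lt_one_of_one_lt₀ hq
  refine (tendsto_one_sub_pow_div_one_add_pow_of_norm_lt_one hinv).neg.congr fun L => ?_
  have hqL : q ^ L ≠ 0 := pow_ne_zero L hq0
  rw [inv_pow, show 1 - (q ^ L)⁻¹ = (q ^ L - 1) / q ^ L by field_simp,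
    show 1 + (q ^ L)⁻¹ = (q ^ L + 1) / q ^ L by field_simp, div_div_div_cancel_right₀ hqL,
    ← neg_div, neg_sub, add_comm]

end PowRatio

theorem Real.tendsto_one_sub_exp_neg_pow_div_one_add_exp_neg_pow {x : ℝ} (hx : x ≠ 0) :
    Tendsto (fun L : ℕ => (1 - Real.exp (-x) ^ L) / (1 + Real.exp (-x) ^ L)) atTop
      (nhds (Real.sign x)) := by
  rcases hx.lt_or_gt with hneg | hpos
  · rw [Real.sign_of_neg hneg]
    refine tendsto_one_sub_pow_div_one_add_pow_of_one_lt_norm ?_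
    rw [Real.norm_of_nonneg (Real.exp_pos _).le, Real.one_lt_exp_iff]
    linarith
  · rw [Real.sign_of_pos hpos]
    refine tendsto_one_sub_pow_div_one_add_pow_of_norm_lt_one ?_
    rw [Real.norm_of_nonneg (Real.exp_pos _).le, Real.exp_lt_one_iff]
    linarith

open scoped MatrixOrder in
theorem Matrix.PosSemidef.sqrt_eq_cfcSqrt {m 𝕜 : Type*} [Fintype m] [DecidableEq m] [RCLike 𝕜]
    {A : Matrix m m 𝕜} (hA : A.PosSemidef) : hA.sqrt = CFC.sqrt A := by
  rw [CFC.sqrt_eq_cfc, cfc_nnreal_eq_real _ A, hA.1.cfc_eq]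
  simp only [IsHermitian.cfc, Matrix.PosSemidef.sqrt, Unitary.conjStarAlgAut_apply]
  congr 2
  congr 1
  funext i
  simp [Real.coe_toNNReal', max_eq_left (hA.eigenvalues_nonneg i)]

namespace Matrix.IsHermitian

variable {m : Type*} [Fintype m] [DecidableEq m]

open scoped MatrixOrder in
theorem mul_inv_sqrt_conjTranspose_mul_self_eq_cfc_sign {𝕜 : Type*} [RCLike 𝕜]
    {H : Matrix m m 𝕜} (hH : H.IsHermitian) (h0 : ∀ x ∈ spectrum ℝ H, x ≠ 0) :
    H * (posSemidef_conjTranspose_mul_self H).sqrt⁻¹ = cfc Real.sign H := by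
  have habs : (posSemidef_conjTranspose_mul_self H).sqrt = cfc (fun x : ℝ => |x|) H := by
    rw [PosSemidef.sqrt_eq_cfcSqrt, ← star_eq_conjTranspose, ← CFC.abs, CFC.abs_eq_cfc_norm H]
    rfl
  rw [habs, nonsing_inv_eq_ringInverse]
  nth_rewrite 1 [← cfc_id' ℝ H]
  rw [cfc_mul_ringInverse_cfc _ _ _ (fun x hx => abs_ne_zero.2 (h0 x hx))]
  refine cfc_congr fun x hx => ?_
  rcases (h0 x hx).lt_or_gt with hneg | hpos
  · rw [abs_of_neg hneg, div_neg, div_self hneg.ne, Real.sign_of_neg hneg]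
  · rw [abs_of_pos hpos, div_self hpos.ne', Real.sign_of_pos hpos]

open scoped Matrix.Norms.L2Operator in
theorem exp_eq_cfc {H : Matrix m m ℂ} (hH : H.IsHermitian) :
    NormedSpace.exp H = cfc Real.exp H :=
  (CFC.real_exp_eq_normedSpace_exp hH.isSelfAdjoint).symm

theorem one_sub_exp_neg_pow_mul_inv_eq_cfc {H : Matrix m m ℂ} (hH : H.IsHermitian) (L : ℕ) :
    (1 - NormedSpace.exp (-H) ^ L) * (1 + NormedSpace.exp (-H) ^ L)⁻¹ =
      cfc (fun x => (1 - Real.exp (-x) ^ L) / (1 + Real.exp (-x) ^ L)) H := by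
  rw [hH.neg.exp_eq_cfc, ← cfc_comp_neg Real.exp H, ← cfc_pow _ L H, nonsing_inv_eq_ringInverse,
    ← cfc_const_one ℝ H, ← cfc_sub (fun _ => 1) _ H,
    ← cfc_add H (fun _ => 1) (fun x => Real.exp (-x) ^ L)]
  exact cfc_mul_ringInverse_cfc _ _ _ fun x _ => by positivity

end Matrix.IsHermitian

/-- For H an n×n Hermitian matrix with no zero eigenvalues and T = exp(−H),
(1 − T^L)(1 + T^L)⁻¹ tends, as L → ∞, to the sign function
ε(H) = H (H²)^(−1/2) of H (here H² = Hᴴ H since H is Hermitian). -/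
theorem stmt16 {n : ℕ} (H : Matrix (Fin n) (Fin n) ℂ)
    (hH : H.IsHermitian) (heig : ∀ i, hH.eigenvalues i ≠ 0) :
    Tendsto
      (fun L : ℕ =>
        (1 - (NormedSpace.exp (-H)) ^ L) * (1 + (NormedSpace.exp (-H)) ^ L)⁻¹)
      atTop
      (nhds (H * ((posSemidef_conjTranspose_mul_self H).sqrt)⁻¹)) := by
  have h0 : ∀ x ∈ spectrum ℝ H, x ≠ 0 := by
    rw [hH.spectrum_real_eq_range_eigenvalues]
    rintro _ ⟨i, rfl⟩
    exact heig i
  simp_rw [hH.one_sub_exp_neg_pow_mul_inv_eq_cfc,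
    hH.mul_inv_sqrt_conjTranspose_mul_self_eq_cfc_sign h0]
  exact tendsto_cfc_fun_of_finite_spectrum H.finite_real_spectrum
    fun x hx => Real.tendsto_one_sub_exp_neg_pow_div_one_add_exp_neg_pow (h0 x hx)
end

section
/- Let γ₅ be a Hermitian involution and Ê an operator with Ê² = 1 and Êγ₅ + γ₅Ê having appropriate structure such that D = 1 + γ₅Ê satisfies the Ginsparg-Wilson equation. Then −trace(γ₅ D) = −trace(Ê) = 2(N₊ − N₋), where N₊ (resp. N₋) is the dimension of the space of zeromodes of D lying in the γ₅ = +1 (resp. −1) eigenspace, provided every zeromode of D is a γ₅ eigenvector and nonzero eigenvalue contributions cancel. -/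
open Matrix

lemma traceMVL {n : ℕ} (A : Matrix (Fin n) (Fin n) ℂ) :
    LinearMap.trace ℂ (Fin n → ℂ) A.mulVecLin = A.trace := by
  rw [LinearMap.trace_eq_matrix_trace ℂ (Pi.basisFun ℂ (Fin n)),
    LinearMap.toMatrix_eq_toMatrix', ← Matrix.toLin'_apply', LinearMap.toMatrix'_toLin']

lemma traceIdem {n : ℕ} (Q : Matrix (Fin n) (Fin n) ℂ) (hQ : Q * Q = Q) :
    Q.trace = (Module.finrank ℂ (LinearMap.range Q.mulVecLin) : ℂ) := by
  have hproj : LinearMap.IsProj (LinearMap.range Q.mulVecLin) Q.mulVecLin := by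
    constructor
    · exact fun x => LinearMap.mem_range_self _ x
    · rintro x ⟨y, rfl⟩
      have := congrArg (fun M : Matrix (Fin n) (Fin n) ℂ => M.mulVecLin y) hQ
      simpa [Matrix.mulVecLin_mul] using this
  rw [← traceMVL, hproj.trace]

lemma finrankKerConj {n : ℕ} (U A B : Matrix (Fin n) (Fin n) ℂ)
    (hU1 : star U * U = 1) (hU2 : U * star U = 1) :
    Module.finrank ℂ ↥(LinearMap.ker (U * A * star U).mulVecLin
        ⊓ LinearMap.ker (U * B * star U).mulVecLin)
      = Module.finrank ℂ ↥(LinearMap.ker A.mulVecLin ⊓ LinearMap.ker B.mulVecLin) := by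
  have h1 : U.mulVecLin ∘ₗ (star U).mulVecLin = LinearMap.id := by
    rw [← Matrix.mulVecLin_mul, hU2, Matrix.mulVecLin_one]
  have h2 : (star U).mulVecLin ∘ₗ U.mulVecLin = LinearMap.id := by
    rw [← Matrix.mulVecLin_mul, hU1, Matrix.mulVecLin_one]
  set e : (Fin n → ℂ) ≃ₗ[ℂ] (Fin n → ℂ) :=
    LinearEquiv.ofLinear U.mulVecLin (star U).mulVecLin h1 h2 with he
  have hker : ∀ C : Matrix (Fin n) (Fin n) ℂ,
      LinearMap.ker (U * C * star U).mulVecLin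
        = Submodule.map (e : (Fin n → ℂ) →ₗ[ℂ] (Fin n → ℂ)) (LinearMap.ker C.mulVecLin) := by
    intro C
    ext x
    have hce : ∀ y, (e : (Fin n → ℂ) →ₗ[ℂ] (Fin n → ℂ)) y = U *ᵥ y := fun y => rfl
    simp only [LinearMap.mem_ker, Submodule.mem_map, Matrix.mulVecLin_apply, hce]
    constructor
    · intro hx
      refine ⟨star U *ᵥ x, ?_, ?_⟩
      · have hz : U *ᵥ (C *ᵥ (star U *ᵥ x)) = 0 := by
          rw [Matrix.mulVec_mulVec, Matrix.mulVec_mulVec]; exact hx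
        have h3 := congrArg (fun v => star U *ᵥ v) hz
        simpa [Matrix.mulVec_mulVec, ← Matrix.mul_assoc, hU1, Matrix.one_mulVec,
          Matrix.mulVec_zero] using h3
      · rw [Matrix.mulVec_mulVec, hU2, Matrix.one_mulVec]
    · rintro ⟨y, hy, rfl⟩
      rw [Matrix.mulVec_mulVec, Matrix.mul_assoc (U * C) (star U) U, hU1, Matrix.mul_one,
        ← Matrix.mulVec_mulVec, hy, Matrix.mulVec_zero]
  rw [hker A, hker B]
  rw [← Submodule.map_inf ((e : (Fin n → ℂ) →ₗ[ℂ] (Fin n → ℂ))) e.injective,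
    LinearEquiv.finrank_map_eq]

/-- Lattice index theorem: for γ₅ a traceless Hermitian involution, Ê² = 1 with
Êᴴ = γ₅ Ê γ₅, and D = 1 + γ₅Ê (a Ginsparg-Wilson operator), one has
−trace(γ₅ D) = −trace Ê = 2(N₊ − N₋), where N₊ (resp. N₋) is the dimension of
the space of zeromodes of D lying in the γ₅ = +1 (resp. −1) eigenspace. -/
theorem stmt18 {N : ℕ} (γ₅ E D : Matrix (Fin (2 * N)) (Fin (2 * N)) ℂ)
    (hγ₅H : γ₅ᴴ = γ₅) (hγ₅2 : γ₅ * γ₅ = 1) (hγ₅tr : γ₅.trace = 0)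
    (hE2 : E * E = 1) (hEadj : Eᴴ = γ₅ * E * γ₅)
    (hD : D = 1 + γ₅ * E) :
    -(γ₅ * D).trace = -E.trace
    ∧ -E.trace
        = 2 * ((Module.finrank ℂ ↥
              (LinearMap.ker D.mulVecLin ⊓ LinearMap.ker (γ₅ - 1).mulVecLin) : ℂ)
            - (Module.finrank ℂ ↥
              (LinearMap.ker D.mulVecLin ⊓ LinearMap.ker (γ₅ + 1).mulVecLin) : ℂ)) := by
  have h1 : γ₅ * D = γ₅ + E := by
    rw [hD, mul_add, mul_one, ← mul_assoc, hγ₅2, one_mul]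
  refine ⟨by rw [h1, trace_add, hγ₅tr, zero_add], ?_⟩
  -- the Hermitian matrix H = γ₅ E
  have hH : (γ₅ * E).IsHermitian := by
    show (γ₅ * E)ᴴ = γ₅ * E
    rw [conjTranspose_mul, hEadj, hγ₅H, mul_assoc, hγ₅2, mul_one]
  set U : Matrix (Fin (2 * N)) (Fin (2 * N)) ℂ :=
    (hH.eigenvectorUnitary : Matrix (Fin (2 * N)) (Fin (2 * N)) ℂ) with hU
  set d : Fin (2 * N) → ℝ := hH.eigenvalues with hd
  set Δ : Matrix (Fin (2 * N)) (Fin (2 * N)) ℂ := diagonal (fun i => (d i : ℂ)) with hΔ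
  have hU1 : star U * U = 1 := mem_unitaryGroup_iff'.mp hH.eigenvectorUnitary.2
  have hU2 : U * star U = 1 := mem_unitaryGroup_iff.mp hH.eigenvectorUnitary.2
  have hspec : γ₅ * E = U * Δ * star U := hH.spectral_theorem
  set G : Matrix (Fin (2 * N)) (Fin (2 * N)) ℂ := star U * γ₅ * U with hG
  have hγU : γ₅ = U * G * star U := by
    rw [hG]
    calc γ₅ = (U * star U) * γ₅ * (U * star U) := by rw [hU2, one_mul, mul_one]
    _ = U * (star U * γ₅ * U) * star U := by simp only [Matrix.mul_assoc]
  have hG2 : G * G = 1 := by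
    rw [hG]
    calc star U * γ₅ * U * (star U * γ₅ * U)
        = star U * (γ₅ * (U * star U) * γ₅) * U := by simp only [Matrix.mul_assoc]
      _ = 1 := by rw [hU2, mul_one, hγ₅2, mul_one, hU1]
  have hGtr : G.trace = 0 := by
    rw [hG, mul_assoc, trace_mul_comm, mul_assoc, hU2, mul_one, hγ₅tr]
  -- the key relation Δ G Δ = G
  have hHγH : (γ₅ * E) * γ₅ * (γ₅ * E) = γ₅ := by
    calc (γ₅ * E) * γ₅ * (γ₅ * E) = γ₅ * E * (γ₅ * γ₅) * E := by simp only [Matrix.mul_assoc]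
    _ = γ₅ := by rw [hγ₅2, mul_one, mul_assoc, hE2, mul_one]
  have hΔGΔ : Δ * G * Δ = G := by
    have h2 : (U * Δ * star U) * γ₅ * (U * Δ * star U) = γ₅ := by rw [← hspec]; exact hHγH
    rw [hG]
    calc Δ * (star U * γ₅ * U) * Δ
        = (star U * U) * Δ * (star U * γ₅ * U) * Δ * (star U * U) := by
          rw [hU1, one_mul, mul_one]
      _ = star U * ((U * Δ * star U) * γ₅ * (U * Δ * star U)) * U := by
          simp only [Matrix.mul_assoc]
      _ = star U * γ₅ * U := by rw [h2]
  have hkey : ∀ i j, (d i : ℂ) * G i j * (d j : ℂ) = G i j := by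
    intro i j
    have h3 := congrFun (congrFun hΔGΔ i) j
    simpa [hΔ, diagonal_mul, mul_diagonal] using h3
  have hGzero : ∀ i j, d i * d j ≠ 1 → G i j = 0 := by
    intro i j hne
    have hk := hkey i j
    have h0 : G i j * ((d i : ℂ) * (d j : ℂ) - 1) = 0 := by linear_combination hk
    rcases mul_eq_zero.mp h0 with h | h
    · exact h
    · exfalso
      apply hne
      have h4 : (d i : ℂ) * (d j : ℂ) = 1 := by linear_combination h
      exact_mod_cast h4
  -- the projector P onto the d = -1 coordinates
  set χ : Fin (2 * N) → ℂ := fun i => if d i = -1 then 1 else 0 with hχ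
  set P : Matrix (Fin (2 * N)) (Fin (2 * N)) ℂ := diagonal χ with hP
  have hχ2 : (fun i => χ i * χ i) = χ := by
    funext i
    rw [hχ]
    by_cases h : d i = -1 <;> simp [h]
  have hP2 : P * P = P := by rw [hP, diagonal_mul_diagonal, hχ2]
  have hGP : G * P = P * G := by
    ext i j
    rw [hP, mul_diagonal, diagonal_mul]
    by_cases hi : d i = -1 <;> by_cases hj : d j = -1
    · rw [hχ]; simp only [hi, hj, if_pos]; ring
    · have h5 : G i j = 0 := by
        apply hGzero
        rw [hi]; intro hc; apply hj; linarith
      simp [h5]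
    · have h5 : G i j = 0 := by
        apply hGzero
        rw [hj]; intro hc; apply hi; linarith
      simp [h5]
    · rw [hχ]; simp only [hi, hj, if_neg, ite_false]; ring
  -- the projectors Q₊, Q₋
  set Qp : Matrix (Fin (2 * N)) (Fin (2 * N)) ℂ := (2 : ℂ)⁻¹ • (P + G * P) with hQp
  set Qm : Matrix (Fin (2 * N)) (Fin (2 * N)) ℂ := (2 : ℂ)⁻¹ • (P - G * P) with hQm
  have hPGP : P * (G * P) = G * P := by
    rw [← mul_assoc, ← hGP, mul_assoc, hP2]
  have hGPP : (G * P) * P = G * P := by rw [mul_assoc, hP2]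
  have hGPGP : (G * P) * (G * P) = P := by
    calc (G * P) * (G * P) = G * (P * (G * P)) := by simp only [Matrix.mul_assoc]
    _ = G * (G * P) := by rw [hPGP]
    _ = (G * G) * P := by rw [← Matrix.mul_assoc]
    _ = P := by rw [hG2, one_mul]
  have hexp : (P + G * P) * (P + G * P) = (2 : ℂ) • (P + G * P) := by
    rw [add_mul, mul_add, mul_add, hP2, hPGP, hGPP, hGPGP]
    module
  have hexm : (P - G * P) * (P - G * P) = (2 : ℂ) • (P - G * P) := by
    rw [sub_mul, mul_sub, mul_sub, hP2, hPGP, hGPP, hGPGP]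
    module
  have hQp2 : Qp * Qp = Qp := by
    rw [hQp, smul_mul_smul_comm, hexp, smul_smul]
    norm_num
  have hQm2 : Qm * Qm = Qm := by
    rw [hQm, smul_mul_smul_comm, hexm, smul_smul]
    norm_num
  -- matrix identities for the projectors
  have hPQp : P * Qp = Qp := by
    rw [hQp, mul_smul_comm, mul_add, hP2, hPGP]
  have hGQp : G * Qp = Qp := by
    rw [hQp, mul_smul_comm, mul_add, ← mul_assoc, hG2, one_mul, add_comm]
  have hPQm : P * Qm = Qm := by
    rw [hQm, mul_smul_comm, mul_sub, hP2, hPGP]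
  have hGQm : G * Qm = -Qm := by
    rw [hQm, mul_smul_comm, mul_sub, ← mul_assoc, hG2, one_mul, ← smul_neg, neg_sub]
  -- ranges of the projectors
  have hrangep : LinearMap.range Qp.mulVecLin
      = LinearMap.ker (P - 1).mulVecLin ⊓ LinearMap.ker (G - 1).mulVecLin := by
    apply le_antisymm
    · rintro x ⟨y, rfl⟩
      constructor
      · show (P - 1) *ᵥ (Qp.mulVecLin y) = 0
        rw [Matrix.mulVecLin_apply, sub_mulVec, one_mulVec, mulVec_mulVec, hPQp, sub_self]
      · show (G - 1) *ᵥ (Qp.mulVecLin y) = 0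
        rw [Matrix.mulVecLin_apply, sub_mulVec, one_mulVec, mulVec_mulVec, hGQp, sub_self]
    · rintro x ⟨hx1, hx2⟩
      have hPx : P *ᵥ x = x := by
        have h6 : (P - 1) *ᵥ x = 0 := hx1
        rwa [sub_mulVec, one_mulVec, sub_eq_zero] at h6
      have hGx : G *ᵥ x = x := by
        have h6 : (G - 1) *ᵥ x = 0 := hx2
        rwa [sub_mulVec, one_mulVec, sub_eq_zero] at h6
      refine ⟨x, ?_⟩
      show Qp *ᵥ x = x
      rw [hQp, smul_mulVec, add_mulVec, hPx, ← mulVec_mulVec, hPx, hGx,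
        ← two_smul ℂ x, smul_smul]
      norm_num
  have hrangem : LinearMap.range Qm.mulVecLin
      = LinearMap.ker (P - 1).mulVecLin ⊓ LinearMap.ker (G + 1).mulVecLin := by
    apply le_antisymm
    · rintro x ⟨y, rfl⟩
      constructor
      · show (P - 1) *ᵥ (Qm.mulVecLin y) = 0
        rw [Matrix.mulVecLin_apply, sub_mulVec, one_mulVec, mulVec_mulVec, hPQm, sub_self]
      · show (G + 1) *ᵥ (Qm.mulVecLin y) = 0
        rw [Matrix.mulVecLin_apply, add_mulVec, one_mulVec, mulVec_mulVec, hGQm,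
          neg_mulVec, neg_add_cancel]
    · rintro x ⟨hx1, hx2⟩
      have hPx : P *ᵥ x = x := by
        have h6 : (P - 1) *ᵥ x = 0 := hx1
        rwa [sub_mulVec, one_mulVec, sub_eq_zero] at h6
      have hGx : G *ᵥ x = -x := by
        have h6 : (G + 1) *ᵥ x = 0 := hx2
        rw [add_mulVec, one_mulVec] at h6
        linear_combination (norm := module) h6
      refine ⟨x, ?_⟩
      show Qm *ᵥ x = x
      rw [hQm, smul_mulVec, sub_mulVec, hPx, ← mulVec_mulVec, hPx, hGx,
        sub_neg_eq_add, ← two_smul ℂ x, smul_smul]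
      norm_num
  -- identification of the P-kernel with the Δ-kernel
  have hkerP : LinearMap.ker (P - 1).mulVecLin = LinearMap.ker (1 + Δ).mulVecLin := by
    ext x
    simp only [LinearMap.mem_ker, Matrix.mulVecLin_apply, sub_mulVec, add_mulVec,
      one_mulVec, funext_iff, Pi.sub_apply, Pi.add_apply, Pi.zero_apply, hP, hΔ,
      mulVec_diagonal]
    refine forall_congr' fun i => ?_
    by_cases h : d i = -1
    · rw [hχ]
      simp only [h, if_pos]
      push_cast [h]
      constructor <;> intro <;> ring
    · rw [hχ]
      simp only [h, if_neg, ite_false, zero_mul, zero_sub, neg_eq_zero]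
      constructor
      · intro hx
        rw [hx]
        ring
      · intro hx
        have h7 : (1 + (d i : ℂ)) * x i = 0 := by linear_combination hx
        rcases mul_eq_zero.mp h7 with h8 | h8
        · exfalso
          apply h
          have : (1 : ℝ) + d i = 0 := by exact_mod_cast h8
          linarith
        · exact h8
  -- conjugating the original kernels
  have hDconj : D = U * (1 + Δ) * star U := by
    rw [hD, hspec, mul_add, mul_one, add_mul, hU2]
  have hγm : γ₅ - 1 = U * (G - 1) * star U := by
    rw [mul_sub, mul_one, sub_mul, hU2, ← hγU]
  have hγp : γ₅ + 1 = U * (G + 1) * star U := by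
    rw [mul_add, mul_one, add_mul, hU2, ← hγU]
  have hNp : Module.finrank ℂ
        ↥(LinearMap.ker D.mulVecLin ⊓ LinearMap.ker (γ₅ - 1).mulVecLin)
      = Module.finrank ℂ
        ↥(LinearMap.ker (1 + Δ).mulVecLin ⊓ LinearMap.ker (G - 1).mulVecLin) := by
    rw [hDconj, hγm]
    exact finrankKerConj U (1 + Δ) (G - 1) hU1 hU2
  have hNm : Module.finrank ℂ
        ↥(LinearMap.ker D.mulVecLin ⊓ LinearMap.ker (γ₅ + 1).mulVecLin)
      = Module.finrank ℂ
        ↥(LinearMap.ker (1 + Δ).mulVecLin ⊓ LinearMap.ker (G + 1).mulVecLin) := by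
    rw [hDconj, hγp]
    exact finrankKerConj U (1 + Δ) (G + 1) hU1 hU2
  -- traces of the projectors give the dimensions
  have hQptr : Qp.trace
      = (Module.finrank ℂ
          ↥(LinearMap.ker D.mulVecLin ⊓ LinearMap.ker (γ₅ - 1).mulVecLin) : ℂ) := by
    have h9 := traceIdem Qp hQp2
    rw [hrangep, hkerP, ← hNp] at h9
    exact h9
  have hQmtr : Qm.trace
      = (Module.finrank ℂ
          ↥(LinearMap.ker D.mulVecLin ⊓ LinearMap.ker (γ₅ + 1).mulVecLin) : ℂ) := by
    have h9 := traceIdem Qm hQm2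
    rw [hrangem, hkerP, ← hNm] at h9
    exact h9
  -- trace computations
  have htrE : E.trace = (G * Δ).trace := by
    have hE' : E = γ₅ * (U * Δ * star U) := by rw [← hspec, ← mul_assoc, hγ₅2, one_mul]
    rw [hE', hG]
    rw [show γ₅ * (U * Δ * star U) = (γ₅ * U * Δ) * star U by simp only [Matrix.mul_assoc]]
    rw [trace_mul_comm]
    congr 1
    simp only [Matrix.mul_assoc]
  have hGΔPd : ∀ i, (G * Δ) i i = G i i - 2 * (G * P) i i := by
    intro i
    rw [hΔ, hP, mul_diagonal, mul_diagonal]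
    by_cases h : d i = -1
    · rw [hχ]
      simp only [h, if_pos]
      push_cast [h]
      ring
    · have hχ0 : χ i = 0 := by rw [hχ]; simp [h]
      rw [hχ0]
      have h0 : G i i * (((d i : ℂ) - 1) * ((d i : ℂ) + 1)) = 0 := by
        linear_combination hkey i i
      rcases mul_eq_zero.mp h0 with h8 | h8
      · rw [h8]; ring
      · rcases mul_eq_zero.mp h8 with h9 | h9
        · have : (d i : ℂ) = 1 := by linear_combination h9
          rw [this]; ring
        · exfalso
          apply h
          have : d i + 1 = 0 := by exact_mod_cast h9
          linarith
  have htrGΔ : (G * Δ).trace = G.trace - 2 * (G * P).trace := by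
    simp only [Matrix.trace, Matrix.diag]
    rw [Finset.mul_sum, ← Finset.sum_sub_distrib]
    exact Finset.sum_congr rfl fun i _ => hGΔPd i
  have hQpm : Qp - Qm = G * P := by
    rw [hQp, hQm]
    module
  calc -E.trace = -(G * Δ).trace := by rw [htrE]
    _ = 2 * (G * P).trace := by rw [htrGΔ, hGtr]; ring
    _ = 2 * (Qp.trace - Qm.trace) := by rw [← trace_sub, hQpm]
    _ = 2 * ((Module.finrank ℂ ↥
            (LinearMap.ker D.mulVecLin ⊓ LinearMap.ker (γ₅ - 1).mulVecLin) : ℂ)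
          - (Module.finrank ℂ ↥
            (LinearMap.ker D.mulVecLin ⊓ LinearMap.ker (γ₅ + 1).mulVecLin) : ℂ)) := by
      rw [hQptr, hQmtr]
end
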